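/- The quantity K₊¹(e) := (1/2)(A₁(e) + B₁(e)) is strictly negative for all 0 < e < 1, where A₁, B₁ are built from the Bessel function J₁ as in the stated definitions. -/

import Mathlib

open Real Set

/-- Bessel function of the first kind of integer order `m`, defined by its
everywhere-convergent power series. -/
noncomputable def besselJ (m : ℕ) (x : ℝ) : ℝ :=
  ∑' j : ℕ, (-1 : ℝ) ^ j * (x / 2) ^ (2 * j + m) /
    ((Nat.factorial j : ℝ) * (Nat.factorial (j + m) : ℝ))

/-- `Aₘ(e) = (4/(m²e²))[2me(1−e²)Jₘ'(me) − (2−e²)Jₘ(me)]`. -/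
noncomputable def besselA (m : ℕ) (e : ℝ) : ℝ :=
  (4 / ((m : ℝ) ^ 2 * e ^ 2)) *
    (2 * (m : ℝ) * e * (1 - e ^ 2) * deriv (besselJ m) ((m : ℝ) * e)
      - (2 - e ^ 2) * besselJ m ((m : ℝ) * e))

/-- `Bₘ(e) = −(8/(m²e²))√(1−e²)[e Jₘ'(me) − m(1−e²)Jₘ(me)]`. -/
noncomputable def besselB (m : ℕ) (e : ℝ) : ℝ :=
  -(8 / ((m : ℝ) ^ 2 * e ^ 2)) * Real.sqrt (1 - e ^ 2) *
    (e * deriv (besselJ m) ((m : ℝ) * e)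
      - (m : ℝ) * (1 - e ^ 2) * besselJ m ((m : ℝ) * e))

/-- `K₊ᵐ(e) = (m/2)(Aₘ(e) + Bₘ(e))`. -/
noncomputable def Kplus (m : ℕ) (e : ℝ) : ℝ :=
  ((m : ℝ) / 2) * (besselA m e + besselB m e)

/-!
The leading terms of the series of `J₁(x)` and `J₁'(x)` are `x/2` and `1/2`, and for `0 < x < 1`
their tails are dominated by geometric series of ratio below `1/2`, so `J₁(e) > 0` and
`J₁'(e) > 0`. With `η = √(1 - e²) ∈ (0, 1)`, the quantity `K₊¹(e)` factors as
`(2/e²) (η - 1) (2eη J₁'(e) + (2η² + η + 1) J₁(e))`, a negative times a positive number.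
-/

open scoped Nat

noncomputable def besselTerm (m j : ℕ) (x : ℝ) : ℝ :=
  (-1 : ℝ) ^ j * (x / 2) ^ (2 * j + m) / ((j ! : ℝ) * ((j + m)! : ℝ))

-- The exponent `2 * j + m - 1` is truncated only at `j = m = 0`, where the coefficient vanishes.
noncomputable def besselTermDeriv (m j : ℕ) (x : ℝ) : ℝ :=
  (-1 : ℝ) ^ j * (((2 * j + m : ℕ) : ℝ) / 2 * (x / 2) ^ (2 * j + m - 1)) /
    ((j ! : ℝ) * ((j + m)! : ℝ))

theorem besselJ_eq_tsum_besselTerm (m : ℕ) (x : ℝ) :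
    besselJ m x = ∑' j, besselTerm m j x := rfl

theorem hasDerivAt_besselTerm (m j : ℕ) (x : ℝ) :
    HasDerivAt (besselTerm m j) (besselTermDeriv m j x) x := by
  refine ((((((hasDerivAt_id x).div_const 2).fun_pow (2 * j + m)).const_mul
    ((-1 : ℝ) ^ j)).div_const ((j ! : ℝ) * ((j + m)! : ℝ)) :
      HasDerivAt (besselTerm m j) _ x)).congr_deriv ?_
  rw [besselTermDeriv, id]
  ring

theorem abs_besselTerm_le (m j : ℕ) (x : ℝ) :
    |besselTerm m j x| ≤ |x / 2| ^ (2 * j + m) / j ! := by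
  have hfac : (0 : ℝ) < j ! * (j + m)! := by positivity
  rw [besselTerm, abs_div, abs_mul, abs_pow, abs_pow, abs_neg, abs_one, one_pow, one_mul,
    abs_of_pos hfac, ← div_div]
  exact div_le_self (by positivity) (Nat.one_le_cast.mpr (j + m).factorial_pos)

theorem abs_besselTermDeriv_le (m j : ℕ) (x : ℝ) :
    |besselTermDeriv m j x| ≤ |x / 2| ^ (2 * j + m - 1) / j ! := by
  have hfac : ((2 * j + m : ℕ) : ℝ) / 2 ≤ (j + m)! := by
    have : 2 * j + m ≤ 2 * (j + m)! := by linarith [(j + m).self_le_factorial]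
    rw [div_le_iff₀ two_pos]
    exact_mod_cast this.trans_eq (mul_comm _ _)
  have hpos : (0 : ℝ) < j ! * (j + m)! := by positivity
  have hcoef : (0 : ℝ) ≤ ((2 * j + m : ℕ) : ℝ) / 2 := by positivity
  rw [besselTermDeriv, abs_div, abs_mul, abs_pow, abs_neg, abs_one, one_pow, one_mul,
    abs_mul, abs_pow, abs_of_nonneg hcoef, abs_of_pos hpos,
    div_le_div_iff₀ hpos (by positivity)]
  calc ((2 * j + m : ℕ) : ℝ) / 2 * |x / 2| ^ (2 * j + m - 1) * j !
      ≤ (j + m)! * |x / 2| ^ (2 * j + m - 1) * j ! := by gcongr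
    _ = |x / 2| ^ (2 * j + m - 1) * (j ! * (j + m)!) := by ring

theorem summable_pow_two_mul_add_div_factorial (m : ℕ) (c : ℝ) :
    Summable fun j : ℕ => c ^ (2 * j + m) / j ! := by
  have h := (Real.summable_pow_div_factorial (c ^ 2)).mul_left (c ^ m)
  refine h.congr fun j => ?_
  rw [pow_add, pow_mul]
  ring

theorem summable_besselTerm (m : ℕ) (x : ℝ) : Summable fun j => besselTerm m j x :=
  .of_norm_bounded (summable_pow_two_mul_add_div_factorial m |x / 2|)
    fun j => abs_besselTerm_le m j x

theorem hasDerivAt_besselJ (m : ℕ) (x : ℝ) :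
    HasDerivAt (besselJ m) (∑' j, besselTermDeriv m j x) x := by
  set c := |x| + 1
  have hc : 1 ≤ c := by simp [c]
  have hbound : ∀ j y, y ∈ Ioo (-(2 * c)) (2 * c) →
      ‖besselTermDeriv m j y‖ ≤ c ^ (2 * j + m) / j ! := by
    intro j y hy
    have hy2 : |y / 2| ≤ c := by
      rw [abs_div, abs_two, div_le_iff₀ two_pos, abs_le]
      constructor <;> linarith [hy.1, hy.2]
    refine (abs_besselTermDeriv_le m j y).trans ?_
    gcongr
    exact (pow_le_pow_left₀ (abs_nonneg _) hy2 _).trans (pow_le_pow_right₀ hc (Nat.sub_le _ _))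
  have hx : x ∈ Ioo (-(2 * c)) (2 * c) := by
    rw [mem_Ioo, ← abs_lt]
    linarith [abs_nonneg x]
  exact hasDerivAt_tsum_of_isPreconnected (summable_pow_two_mul_add_div_factorial m c) isOpen_Ioo
    (convex_Ioo _ _).isPreconnected (fun j y _ => hasDerivAt_besselTerm m j y) hbound hx
    (summable_besselTerm m x) hx

theorem tsum_pos_of_abs_tail_le {f : ℕ → ℝ} {r : ℝ} (hr0 : 0 ≤ r) (hr : r < 1 / 2)
    (h0 : 0 < f 0) (htail : ∀ j, |f (j + 1)| ≤ f 0 * r ^ (j + 1)) : 0 < ∑' j, f j := by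
  have hgeom : HasSum (fun j => f 0 * r ^ (j + 1)) (f 0 * r * (1 - r)⁻¹) := by
    simpa only [pow_succ', mul_assoc] using
      (hasSum_geometric_of_lt_one hr0 (by linarith)).mul_left (f 0 * r)
  have hsum : Summable f :=
    (summable_nat_add_iff 1).mp (.of_norm_bounded hgeom.summable htail)
  have hbound : ‖∑' j, f (j + 1)‖ ≤ f 0 * r * (1 - r)⁻¹ :=
    tsum_of_norm_bounded hgeom htail
  rw [Real.norm_eq_abs] at hbound
  have hratio : r * (1 - r)⁻¹ < 1 := by
    rw [← div_eq_mul_inv, div_lt_one (by linarith)]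
    linarith
  rw [hsum.tsum_eq_zero_add]
  nlinarith [neg_abs_le (∑' j, f (j + 1))]

theorem besselJ_one_pos {x : ℝ} (hx0 : 0 < x) (hx : x ^ 2 < 2) : 0 < besselJ 1 x := by
  have h0 : besselTerm 1 0 x = x / 2 := by simp [besselTerm]
  rw [besselJ_eq_tsum_besselTerm]
  refine tsum_pos_of_abs_tail_le (f := fun j => besselTerm 1 j x) (r := (x / 2) ^ 2)
    (by positivity) (by nlinarith) (by rw [h0]; positivity) fun j => ?_
  rw [h0]
  refine (abs_besselTerm_le 1 (j + 1) x).trans ?_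
  rw [abs_of_pos (by positivity : 0 < x / 2), ← pow_mul, ← pow_succ']
  exact div_le_self (by positivity) (Nat.one_le_cast.mpr (j + 1).factorial_pos)

theorem deriv_besselJ_one_pos {x : ℝ} (hx : x ^ 2 < 1) : 0 < deriv (besselJ 1) x := by
  have h0 : besselTermDeriv 1 0 x = 1 / 2 := by simp [besselTermDeriv]
  rw [(hasDerivAt_besselJ 1 x).deriv]
  refine tsum_pos_of_abs_tail_le (f := fun j => besselTermDeriv 1 j x)
    (r := 2 * (x / 2) ^ 2) (by positivity) (by nlinarith) (by rw [h0]; norm_num) fun j => ?_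
  rw [h0]
  refine (abs_besselTermDeriv_le 1 (j + 1) x).trans ?_
  have h2 : (1 : ℝ) ≤ 2 ^ j := one_le_pow₀ one_le_two
  calc |x / 2| ^ (2 * (j + 1) + 1 - 1) / ((j + 1)! : ℝ)
      ≤ ((x / 2) ^ 2) ^ (j + 1) := by
        rw [Nat.add_sub_cancel, pow_mul, sq_abs]
        exact div_le_self (by positivity) (Nat.one_le_cast.mpr (j + 1).factorial_pos)
    _ ≤ 2 ^ j * ((x / 2) ^ 2) ^ (j + 1) := le_mul_of_one_le_left (by positivity) h2
    _ = 1 / 2 * (2 * (x / 2) ^ 2) ^ (j + 1) := by rw [mul_pow, pow_succ (2 : ℝ) j]; ring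

theorem Kplus_one_eq {e : ℝ} (he : e ≠ 0) (he1 : e ^ 2 ≤ 1) :
    Kplus 1 e = 2 / e ^ 2 * ((Real.sqrt (1 - e ^ 2) - 1) *
      (2 * e * Real.sqrt (1 - e ^ 2) * deriv (besselJ 1) e +
        (2 * (1 - e ^ 2) + Real.sqrt (1 - e ^ 2) + 1) * besselJ 1 e)) := by
  have hη : Real.sqrt (1 - e ^ 2) ^ 2 = 1 - e ^ 2 := Real.sq_sqrt (by linarith)
  unfold Kplus besselA besselB
  rw [Nat.cast_one, one_mul, one_mul]
  field_simp
  linear_combination (-8 * e * deriv (besselJ 1) e - 4 * besselJ 1 e) * hη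

/-- `K₊¹(e) < 0` for all `0 < e < 1`. -/
theorem stmt18 (e : ℝ) (he0 : 0 < e) (he1 : e < 1) :
    Kplus 1 e < 0 := by
  have he2 : e ^ 2 < 1 := by nlinarith
  have hJ := besselJ_one_pos he0 (by linarith)
  have hD := deriv_besselJ_one_pos he2
  have hη0 : 0 < Real.sqrt (1 - e ^ 2) := Real.sqrt_pos.mpr (by linarith)
  have hη1 : Real.sqrt (1 - e ^ 2) < 1 := (Real.sqrt_lt' one_pos).mpr (by nlinarith)
  rw [Kplus_one_eq he0.ne' he2.le]
  exact mul_neg_of_pos_of_neg (by positivity)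
    (mul_neg_of_neg_of_pos (by linarith) (by positivity))
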